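/- Fix integers n ≥ 1 and 0 < v_1 < v_2 < ⋯ < v_n < v_{n+1} = N. Let d be a degree vector that is aligned and not identically zero. Then for every 1 ≤ i ≤ n, D(d) < − Σ_{j=1}^{v_i} d^i_j. -/

import Mathlib

open Finset

/-- `Bb m = m(m+1)/2` for `m ≥ 0` and `Bb m = 0` for `m < 0`. -/
def Bb (m : ℤ) : ℤ := if 0 ≤ m then m * (m + 1) / 2 else 0

/-- The degree `D(d)` of the coefficient `J_d` of the twisted small `J`-function of
the abelianization of `Fl(v_1,…,v_n; N)`. -/
def degD (n : ℕ) (v : ℕ → ℕ) (d : ℕ → ℕ → ℕ) : ℤ :=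
  ∑ i ∈ Icc 1 n,
    ((∑ j ∈ Icc 1 (v i), ∑ k ∈ Icc 1 (v i), Bb ((d i j : ℤ) - (d i k : ℤ)))
      - ∑ j ∈ Icc 1 (v i), ∑ r ∈ Icc 1 (v (i + 1)),
          Bb ((d i j : ℤ) - (d (i + 1) r : ℤ)))

/-- A degree vector `d` is aligned if for every `1 ≤ i ≤ n` there is an injection
`f_i : {1,…,v_i} → {1,…,v_{i+1}}` with `d^i_j ≥ d^{i+1}_{f_i(j)}` for all `j`. -/
def Aligned (n : ℕ) (v : ℕ → ℕ) (d : ℕ → ℕ → ℕ) : Prop :=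
  ∀ i, 1 ≤ i → i ≤ n → ∃ f : ℕ → ℕ,
    Set.InjOn f (Set.Icc 1 (v i)) ∧
    ∀ j, 1 ≤ j → j ≤ v i → 1 ≤ f j ∧ f j ≤ v (i + 1) ∧ d (i + 1) (f j) ≤ d i j

/-! Fix a layer `i` and an injection `f` as in the alignment. In row `j`, each term
`B(d^i_j - d^i_k)` with `k ≠ j` is at most `B(d^i_j - d^{i+1}_{f(k)})`, so the layer is at most
`-Σ_j B(d^i_j - d^{i+1}_{f(j)})` minus the correction `Σ_j B(d^i_j - d^{i+1}_{r₀})`, where `r₀` is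
a column missed by `f`. As `0 ≤ B(m)` and `m ≤ B(m)`, the layer plus its correction is at most
`min(0, Σ_r d^{i+1}_r - Σ_j d^i_j)`. Summing, the layers below `i` contribute at most `0` and
the layers from `i` on telescope to `-Σ_j d^i_j`. The correction is positive at the topmost
nonzero layer, because the layer above it vanishes. -/

lemma Bb_nonneg (m : ℤ) : 0 ≤ Bb m := by
  unfold Bb
  split_ifs
  · positivity
  · rfl

lemma le_Bb (m : ℤ) : m ≤ Bb m := by
  unfold Bb
  split_ifs with hm
  · have : 2 * m ≤ m * (m + 1) := by
      rcases hm.eq_or_lt with rfl | hm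
      · simp
      · nlinarith
    omega
  · omega

lemma Bb_mono : Monotone Bb := by
  intro a b hab
  unfold Bb
  split_ifs with ha hb hb
  · exact Int.ediv_le_ediv (by norm_num) (by nlinarith)
  · omega
  · positivity
  · rfl

@[simp] lemma Bb_zero : Bb 0 = 0 := by simp [Bb]

section Layer

variable {ι κ : Type*} [DecidableEq κ] {s : Finset ι} {t : Finset κ} {a : ι → ℤ} {b : κ → ℤ}
  {f : ι → κ} {r₀ : κ}

/-- The terms `k ≠ j` on the left are matched with the columns `f k` on the right, which
leaves the columns `f j` and `r₀` over. -/
lemma sum_Bb_add_Bb_add_Bb_le (hf : Set.InjOn f s) (hft : Set.MapsTo f s t)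
    (hab : ∀ k ∈ s, b (f k) ≤ a k) (hr₀ : r₀ ∈ t) (hr₀f : r₀ ∉ s.image f) {j : ι} (hj : j ∈ s) :
    ∑ k ∈ s, Bb (a j - a k) + Bb (a j - b (f j)) + Bb (a j - b r₀) ≤
      ∑ r ∈ t, Bb (a j - b r) := by
  classical
  have hrows : ∑ k ∈ s, Bb (a j - a k) + Bb (a j - b (f j)) ≤ ∑ k ∈ s, Bb (a j - b (f k)) := by
    rw [← add_sum_erase s _ hj, ← sum_erase_add s _ hj, sub_self, Bb_zero, zero_add]
    gcongr with k hk
    exact Bb_mono (by linarith [hab k (mem_of_mem_erase hk)])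
  have himage : insert r₀ (s.image f) ⊆ t :=
    insert_subset_iff.2 ⟨hr₀, image_subset_iff.2 fun k hk => hft hk⟩
  calc ∑ k ∈ s, Bb (a j - a k) + Bb (a j - b (f j)) + Bb (a j - b r₀)
      ≤ Bb (a j - b r₀) + ∑ r ∈ s.image f, Bb (a j - b r) := by
        rw [sum_image fun x hx y hy => hf hx hy]; linarith
    _ = ∑ r ∈ insert r₀ (s.image f), Bb (a j - b r) :=
        (sum_insert (f := fun r => Bb (a j - b r)) hr₀f).symm
    _ ≤ ∑ r ∈ t, Bb (a j - b r) :=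
        sum_le_sum_of_subset_of_nonneg himage fun _ _ _ => Bb_nonneg _

lemma sum_Bb_sub_sum_Bb_add_le (hf : Set.InjOn f s) (hft : Set.MapsTo f s t)
    (hab : ∀ k ∈ s, b (f k) ≤ a k) (hr₀ : r₀ ∈ t) (hr₀f : r₀ ∉ s.image f) :
    ∑ j ∈ s, ∑ k ∈ s, Bb (a j - a k) - ∑ j ∈ s, ∑ r ∈ t, Bb (a j - b r)
      + ∑ j ∈ s, Bb (a j - b r₀) ≤ -∑ j ∈ s, Bb (a j - b (f j)) := by
  have := sum_le_sum fun j hj => sum_Bb_add_Bb_add_Bb_le hf hft hab hr₀ hr₀f hj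
  simp only [sum_add_distrib] at this
  linarith

lemma neg_sum_Bb_le_sum_sub_sum (hf : Set.InjOn f s) (hft : Set.MapsTo f s t)
    (hb : ∀ r ∈ t, 0 ≤ b r) :
    -∑ j ∈ s, Bb (a j - b (f j)) ≤ ∑ r ∈ t, b r - ∑ j ∈ s, a j := by
  have hbf : ∑ j ∈ s, b (f j) ≤ ∑ r ∈ t, b r := by
    rw [← sum_image fun x hx y hy => hf hx hy]
    exact sum_le_sum_of_subset_of_nonneg (image_subset_iff.2 fun k hk => hft hk)
      fun r hr _ => hb r hr
  have := sum_le_sum fun j (_ : j ∈ s) => le_Bb (a j - b (f j))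
  rw [sum_sub_distrib] at this
  linarith

end Layer

lemma sum_Icc_le_sub_of_le_min {S U : ℕ → ℤ} {n i : ℕ}
    (h : ∀ ℓ ∈ Icc 1 n, S ℓ ≤ min 0 (U (ℓ + 1) - U ℓ)) (hi : 1 ≤ i) (hin : i ≤ n + 1) :
    ∑ ℓ ∈ Icc 1 n, S ℓ ≤ U (n + 1) - U i := by
  have hlow : ∑ ℓ ∈ Ico 1 i, S ℓ ≤ 0 :=
    sum_nonpos fun ℓ hℓ => (h ℓ (by simp only [mem_Ico, mem_Icc] at hℓ ⊢; omega)).trans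
      (min_le_left _ _)
  have hhigh : ∑ ℓ ∈ Ico i (n + 1), S ℓ ≤ U (n + 1) - U i := by
    rw [← sum_Ico_sub U hin]
    exact sum_le_sum fun ℓ hℓ => (h ℓ (by simp only [mem_Ico, mem_Icc] at hℓ ⊢; omega)).trans
      (min_le_right _ _)
  rw [← Ico_add_one_right_eq_Icc, ← sum_Ico_consecutive _ hi hin]
  linarith

def degDLayer (v : ℕ → ℕ) (d : ℕ → ℕ → ℕ) (i : ℕ) : ℤ :=
  (∑ j ∈ Icc 1 (v i), ∑ k ∈ Icc 1 (v i), Bb ((d i j : ℤ) - (d i k : ℤ)))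
    - ∑ j ∈ Icc 1 (v i), ∑ r ∈ Icc 1 (v (i + 1)), Bb ((d i j : ℤ) - (d (i + 1) r : ℤ))

lemma degD_eq_sum_degDLayer (n : ℕ) (v : ℕ → ℕ) (d : ℕ → ℕ → ℕ) :
    degD n v d = ∑ i ∈ Icc 1 n, degDLayer v d i := rfl

def layerSum (v : ℕ → ℕ) (d : ℕ → ℕ → ℕ) (i : ℕ) : ℤ := ∑ j ∈ Icc 1 (v i), (d i j : ℤ)

/-- Since `v i < v (i + 1)`, the injection misses some column `r₀` of the next layer. -/
lemma exists_degDLayer_add_le {v : ℕ → ℕ} {d : ℕ → ℕ → ℕ} {i : ℕ} (hv : v i < v (i + 1))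
    {f : ℕ → ℕ} (hf : Set.InjOn f (Set.Icc 1 (v i)))
    (hfd : ∀ j, 1 ≤ j → j ≤ v i → 1 ≤ f j ∧ f j ≤ v (i + 1) ∧ d (i + 1) (f j) ≤ d i j) :
    ∃ r₀ ∈ Icc 1 (v (i + 1)),
      degDLayer v d i + ∑ j ∈ Icc 1 (v i), Bb ((d i j : ℤ) - (d (i + 1) r₀ : ℤ)) ≤
        min 0 (layerSum v d (i + 1) - layerSum v d i) := by
  rw [← coe_Icc] at hf
  have hft : Set.MapsTo f (Icc 1 (v i)) (Icc 1 (v (i + 1))) := fun j hj => by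
    simp only [coe_Icc, Set.mem_Icc] at hj ⊢
    exact ⟨(hfd j hj.1 hj.2).1, (hfd j hj.1 hj.2).2.1⟩
  have hcard : #((Icc 1 (v i)).image f) < #(Icc 1 (v (i + 1))) := by
    simpa using card_image_le.trans_lt (by simpa using hv)
  obtain ⟨r₀, hr₀, hr₀f⟩ := exists_mem_notMem_of_card_lt_card hcard
  have key := sum_Bb_sub_sum_Bb_add_le (a := fun j => (d i j : ℤ))
    (b := fun r => (d (i + 1) r : ℤ)) hf hft
    (fun k hk => by rw [mem_Icc] at hk; exact_mod_cast (hfd k hk.1 hk.2).2.2) hr₀ hr₀f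
  refine ⟨r₀, hr₀, le_min ?_ ?_⟩
  · exact key.trans (neg_nonpos.2 (sum_nonneg fun _ _ => Bb_nonneg _))
  · exact key.trans (neg_sum_Bb_le_sum_sub_sum hf hft fun _ _ => by positivity)

lemma exists_top_nonzero_layer {n : ℕ} {v : ℕ → ℕ} {d : ℕ → ℕ → ℕ}
    (hdtop : ∀ r ∈ Icc 1 (v (n + 1)), d (n + 1) r = 0)
    (hne : ∃ i j, 1 ≤ i ∧ i ≤ n ∧ 1 ≤ j ∧ j ≤ v i ∧ d i j ≠ 0) :
    ∃ i ∈ Icc 1 n, (∃ j ∈ Icc 1 (v i), d i j ≠ 0) ∧ ∀ r ∈ Icc 1 (v (i + 1)), d (i + 1) r = 0 := by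
  classical
  obtain ⟨i₁, j₁, hi₁, hi₁n, hj₁, hj₁v, hd₁⟩ := hne
  let P : ℕ → Prop := fun i => ∃ j ∈ Icc 1 (v i), d i j ≠ 0
  have hP₁ : P i₁ := ⟨j₁, mem_Icc.2 ⟨hj₁, hj₁v⟩, hd₁⟩
  set t := Nat.findGreatest P n
  have hi₁t : i₁ ≤ t := Nat.le_findGreatest hi₁n hP₁
  refine ⟨t, mem_Icc.2 ⟨hi₁.trans hi₁t, Nat.findGreatest_le n⟩,
    Nat.findGreatest_spec hi₁n hP₁, fun r hr => ?_⟩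
  rcases (Nat.findGreatest_le (P := P) n).lt_or_eq with htn | htn
  · by_contra hr₀
    exact Nat.findGreatest_is_greatest (Nat.lt_succ_self t) htn ⟨r, hr, hr₀⟩
  · rw [show t = n from htn] at hr ⊢
    exact hdtop r hr

theorem degD_lt_neg_sum_general (n : ℕ) (v : ℕ → ℕ) (d : ℕ → ℕ → ℕ)
    (hvmono : ∀ i, 1 ≤ i → i ≤ n → v i < v (i + 1))
    (hdtop : ∀ r, d (n + 1) r = 0)
    (halign : Aligned n v d)
    (hne : ∃ i j, 1 ≤ i ∧ i ≤ n ∧ 1 ≤ j ∧ j ≤ v i ∧ d i j ≠ 0) :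
    ∀ i, 1 ≤ i → i ≤ n → degD n v d < -(∑ j ∈ Icc 1 (v i), (d i j : ℤ)) := by
  intro i hi hin
  have hlayer : ∀ ℓ ∈ Icc 1 n, ∃ r₀ ∈ Icc 1 (v (ℓ + 1)),
      degDLayer v d ℓ + ∑ j ∈ Icc 1 (v ℓ), Bb ((d ℓ j : ℤ) - (d (ℓ + 1) r₀ : ℤ)) ≤
        min 0 (layerSum v d (ℓ + 1) - layerSum v d ℓ) := fun ℓ hℓ => by
    obtain ⟨hℓ₁, hℓn⟩ := mem_Icc.1 hℓ
    obtain ⟨f, hf, hfd⟩ := halign ℓ hℓ₁ hℓn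
    exact exists_degDLayer_add_le (hvmono ℓ hℓ₁ hℓn) hf hfd
  choose! r₀ hr₀ hle using hlayer
  set E : ℕ → ℤ := fun ℓ => ∑ j ∈ Icc 1 (v ℓ), Bb ((d ℓ j : ℤ) - (d (ℓ + 1) (r₀ ℓ) : ℤ))
  have htel := sum_Icc_le_sub_of_le_min hle hi (by omega)
  have hsumtop : layerSum v d (n + 1) = 0 := by simp [layerSum, hdtop]
  obtain ⟨t, ht, ⟨j, hj, hdt⟩, hzero⟩ := exists_top_nonzero_layer (fun r _ => hdtop r) hne
  have hEt : 1 ≤ E t := calc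
    (1 : ℤ) ≤ Bb (d t j) := (by omega : (1 : ℤ) ≤ d t j).trans (le_Bb _)
    _ = Bb (d t j - d (t + 1) (r₀ t)) := by simp [hzero (r₀ t) (hr₀ t ht)]
    _ ≤ E t := single_le_sum (fun k _ => Bb_nonneg ((d t k : ℤ) - d (t + 1) (r₀ t))) hj
  have hE : E t ≤ ∑ ℓ ∈ Icc 1 n, E ℓ :=
    single_le_sum (fun ℓ _ => sum_nonneg fun _ _ => Bb_nonneg _) ht
  rw [sum_add_distrib, ← degD_eq_sum_degDLayer, hsumtop] at htel
  simp only [layerSum] at htel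
  linarith

/-- First degree-bound lemma: for an aligned, not identically zero degree vector `d`,
for every `1 ≤ i ≤ n`, `D(d) < − Σ_{j=1}^{v_i} d^i_j`. -/
theorem degD_lt_neg_sum (n : ℕ) (hn : 1 ≤ n) (v : ℕ → ℕ) (d : ℕ → ℕ → ℕ)
    (hv1 : 0 < v 1) (hvmono : ∀ i, 1 ≤ i → i ≤ n → v i < v (i + 1))
    (hdtop : ∀ r, d (n + 1) r = 0)
    (halign : Aligned n v d)
    (hne : ∃ i j, 1 ≤ i ∧ i ≤ n ∧ 1 ≤ j ∧ j ≤ v i ∧ d i j ≠ 0) :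
    ∀ i, 1 ≤ i → i ≤ n → degD n v d < -(∑ j ∈ Icc 1 (v i), (d i j : ℤ)) :=
  degD_lt_neg_sum_general n v d hvmono hdtop halign hne
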